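/- Let G=(V,E) be a finite simple graph and U ⊆ V an independent set, and let G' = G[N_G[U]] be the subgraph induced by the closed neighborhood of U. Then the minimum of |S' ∩ U| over all independent dominating sets S' of G' equals |U| − opt_MaxExtVC(G,U). -/

import Mathlib

/-- `S` is a vertex cover of `G`: every edge has an endpoint in `S`. -/
def IsVertexCover {V : Type*} (G : SimpleGraph V) (S : Set V) : Prop :=
  ∀ ⦃u v : V⦄, G.Adj u v → u ∈ S ∨ v ∈ S

/-- `S` is a minimal vertex cover of `G`: no proper subset is a vertex cover. -/
def IsMinimalVertexCover {V : Type*} (G : SimpleGraph V) (S : Set V) : Prop :=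
  IsVertexCover G S ∧ ∀ T : Set V, T ⊂ S → ¬ IsVertexCover G T

/-- `S` is an independent set of `G`: pairwise non-adjacent vertices. -/
def IsIndepSet {V : Type*} (G : SimpleGraph V) (S : Set V) : Prop :=
  ∀ ⦃u v : V⦄, u ∈ S → v ∈ S → ¬ G.Adj u v

/-- `S` is a maximal independent set of `G`: no proper superset is independent. -/
def IsMaximalIndepSet {V : Type*} (G : SimpleGraph V) (S : Set V) : Prop :=
  IsIndepSet G S ∧ ∀ T : Set V, S ⊂ T → ¬ IsIndepSet G T

/-- `(G, U)` is a yes-instance of Ext VC: some minimal vertex cover contains `U`. -/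
def ExtVC {V : Type*} (G : SimpleGraph V) (U : Set V) : Prop :=
  ∃ S : Set V, U ⊆ S ∧ IsMinimalVertexCover G S

/-- `(G, U)` is a yes-instance of Ext IS: some maximal independent set is contained in `U`. -/
def ExtIS {V : Type*} (G : SimpleGraph V) (U : Set V) : Prop :=
  ∃ S : Set V, S ⊆ U ∧ IsMaximalIndepSet G S

/-- The closed neighborhood `N_G[U]` of a set `U` of vertices. -/
def closedNbhd {V : Type*} (G : SimpleGraph V) (U : Set V) : Set V :=
  U ∪ {v | ∃ u ∈ U, G.Adj u v}

/-- `S` is a dominating set of `G`: every vertex is in `S` or adjacent to a vertex of `S`. -/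
def IsDominating {V : Type*} (G : SimpleGraph V) (S : Set V) : Prop :=
  ∀ v : V, v ∈ S ∨ ∃ u ∈ S, G.Adj u v

/-- `opt_MaxExtVC(G, U)`: the maximum of `|S ∩ U|` over all minimal vertex covers `S` of `G`. -/
noncomputable def optMaxExtVC {V : Type*} (G : SimpleGraph V) (U : Set V) : ℕ :=
  sSup {n : ℕ | ∃ S : Set V, IsMinimalVertexCover G S ∧ n = (S ∩ U).ncard}

/-- `opt_MinExtIS(G, U)`: the minimum of `|U| + |S ∩ (V \ U)|` over all maximal independent
sets `S` of `G`. -/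
noncomputable def optMinExtIS {V : Type*} (G : SimpleGraph V) (U : Set V) : ℕ :=
  sInf {n : ℕ | ∃ S : Set V, IsMaximalIndepSet G S ∧ n = U.ncard + (S ∩ Uᶜ).ncard}

/-! The minimal vertex covers of `G` are exactly the complements of its maximal independent sets,
so `opt_MaxExtVC(G, U) = |U| - min |I ∩ U|` over maximal independent sets `I` of `G`. On the other
side, maximal independent sets are the independent dominating sets, and every vertex of `U` has its
whole neighbourhood inside `N_G[U]`; hence extending an independent dominating set of `G[N_G[U]]` to
a maximal independent set of `G`, or restricting one of `G` to `N_G[U]` and extending it there,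
does not change its trace on `U`. -/

section IndepSet

variable {V : Type*} (G : SimpleGraph V)

theorem isIndepSet_empty : IsIndepSet G ∅ := fun _ _ hu _ => hu.elim

theorem isMaximalIndepSet_iff {S : Set V} :
    IsMaximalIndepSet G S ↔ IsIndepSet G S ∧ IsDominating G S := by
  refine and_congr_right fun hS => ⟨fun hmax v => ?_, fun hdom T hST hT => ?_⟩
  · by_contra! hv
    refine hmax (insert v S) (Set.ssubset_insert hv.1) ?_
    rintro a b (rfl | ha) (rfl | hb)
    · exact G.irrefl
    · exact fun h => hv.2 b hb h.symm
    · exact hv.2 a ha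
    · exact hS ha hb
  · obtain ⟨v, hvT, hvS⟩ := Set.exists_of_ssubset hST
    obtain hv | ⟨u, huS, huv⟩ := hdom v
    · exact hvS hv
    · exact hT (hST.subset huS) hvT huv

variable {G}

theorem IsIndepSet.exists_isMaximalIndepSet_superset [Finite V] {S : Set V}
    (hS : IsIndepSet G S) : ∃ T, S ⊆ T ∧ IsMaximalIndepSet G T := by
  obtain ⟨T, ⟨hST, hT⟩, hmax⟩ := Set.Finite.exists_maximalFor Set.ncard
    {T | S ⊆ T ∧ IsIndepSet G T} (Set.toFinite _) ⟨S, subset_rfl, hS⟩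
  refine ⟨T, hST, hT, fun T' hTT' hT' => ?_⟩
  have hlt : T.ncard < T'.ncard := Set.ncard_lt_ncard hTT'
  have hle : T'.ncard ≤ T.ncard := hmax ⟨hST.trans hTT'.subset, hT'⟩ hlt.le
  omega

theorem isVertexCover_iff_isIndepSet_compl {S : Set V} :
    IsVertexCover G S ↔ IsIndepSet G Sᶜ := by
  refine ⟨fun h u v hu hv huv => (h huv).elim hu hv, fun h u v huv => ?_⟩
  by_contra! hc
  exact h hc.1 hc.2 huv

theorem isMinimalVertexCover_iff_isMaximalIndepSet_compl {S : Set V} :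
    IsMinimalVertexCover G S ↔ IsMaximalIndepSet G Sᶜ := by
  simp only [IsMinimalVertexCover, IsMaximalIndepSet, isVertexCover_iff_isIndepSet_compl]
  refine and_congr_right fun _ =>
    ⟨fun h T hST => ?_, fun h T hTS => h _ (compl_lt_compl_iff_lt.2 hTS)⟩
  simpa using h Tᶜ (by simpa using compl_lt_compl_iff_lt.2 hST)

end IndepSet

section ClosedNbhd

variable {V : Type*} {G : SimpleGraph V} {U : Set V}

theorem subset_closedNbhd : U ⊆ closedNbhd G U := Set.subset_union_left

theorem inter_eq_image_inter_of_isDominating_induce {S' : Set ↥(closedNbhd G U)}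
    (hS' : IsDominating (G.induce (closedNbhd G U)) S') {I : Set V} (hI : IsIndepSet G I)
    (hS'I : Subtype.val '' S' ⊆ I) : I ∩ U = Subtype.val '' S' ∩ U := by
  refine subset_antisymm (fun u ⟨huI, huU⟩ => ⟨?_, huU⟩)
    (Set.inter_subset_inter_left _ hS'I)
  obtain hu | ⟨w, hwS', hwu⟩ := hS' ⟨u, subset_closedNbhd huU⟩
  · exact ⟨_, hu, rfl⟩
  · exact absurd hwu (hI (hS'I ⟨w, hwS', rfl⟩) huI)

theorem image_inter_eq_inter_of_isMaximalIndepSet {I : Set V} (hI : IsMaximalIndepSet G I)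
    {S' : Set ↥(closedNbhd G U)} (hS' : IsIndepSet (G.induce (closedNbhd G U)) S')
    (hIS' : {x | ↑x ∈ I} ⊆ S') : Subtype.val '' S' ∩ U = I ∩ U := by
  refine subset_antisymm (fun u ⟨⟨x, hxS', hxu⟩, huU⟩ => ⟨?_, huU⟩)
    (fun u ⟨huI, huU⟩ => ⟨⟨⟨u, subset_closedNbhd huU⟩, hIS' huI, rfl⟩, huU⟩)
  subst hxu
  obtain hx | ⟨w, hwI, hwx⟩ := ((isMaximalIndepSet_iff G).1 hI).2 x
  · exact hx
  · have hw : (⟨w, Or.inr ⟨x, huU, hwx.symm⟩⟩ : ↥(closedNbhd G U)) ∈ S' := hIS' hwI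
    exact absurd hwx (hS' hw hxS')

variable [Finite V]

theorem setOf_ncard_image_inter_indepDominating_closedNbhd (G : SimpleGraph V) (U : Set V) :
    {n : ℕ | ∃ S' : Set ↥(closedNbhd G U),
        IsIndepSet (G.induce (closedNbhd G U)) S' ∧
        IsDominating (G.induce (closedNbhd G U)) S' ∧
        n = (Subtype.val '' S' ∩ U).ncard}
      = {n : ℕ | ∃ I, IsMaximalIndepSet G I ∧ n = (I ∩ U).ncard} := by
  ext n
  constructor
  · rintro ⟨S', hind, hdom, rfl⟩
    have hS : IsIndepSet G (Subtype.val '' S') := by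
      rintro _ _ ⟨a, ha, rfl⟩ ⟨b, hb, rfl⟩
      exact hind ha hb
    obtain ⟨I, hSI, hI⟩ := hS.exists_isMaximalIndepSet_superset
    exact ⟨I, hI, by rw [inter_eq_image_inter_of_isDominating_induce hdom hI.1 hSI]⟩
  · rintro ⟨I, hI, rfl⟩
    have hS : IsIndepSet (G.induce (closedNbhd G U)) {x | ↑x ∈ I} := fun _ _ ha hb => hI.1 ha hb
    obtain ⟨S', hIS', hS'⟩ := hS.exists_isMaximalIndepSet_superset
    obtain ⟨hind, hdom⟩ := (isMaximalIndepSet_iff _).1 hS'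
    exact ⟨S', hind, hdom, by rw [image_inter_eq_inter_of_isMaximalIndepSet hI hind hIS']⟩

end ClosedNbhd

theorem Set.ncard_compl_inter {V : Type*} {U : Set V} (hU : U.Finite) (S : Set V) :
    (Sᶜ ∩ U).ncard = U.ncard - (S ∩ U).ncard := by
  rw [← Set.ncard_inter_add_ncard_sdiff_eq_ncard U S hU, Set.inter_comm S, Set.sdiff_eq,
    Set.inter_comm Sᶜ]
  omega

theorem setOf_ncard_inter_isMinimalVertexCover {V : Type*} [Finite V] (G : SimpleGraph V)
    (U : Set V) :
    {n : ℕ | ∃ S, IsMinimalVertexCover G S ∧ n = (S ∩ U).ncard}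
      = (U.ncard - ·) '' {n : ℕ | ∃ I, IsMaximalIndepSet G I ∧ n = (I ∩ U).ncard} := by
  ext n
  simp only [Set.mem_ofPred_eq, Set.mem_image, isMinimalVertexCover_iff_isMaximalIndepSet_compl]
  constructor
  · rintro ⟨S, hS, rfl⟩
    refine ⟨_, ⟨Sᶜ, hS, rfl⟩, ?_⟩
    rw [Set.ncard_compl_inter U.toFinite]
    have := Set.ncard_le_ncard (Set.inter_subset_right (s := S) (t := U)) U.toFinite
    omega
  · rintro ⟨_, ⟨I, hI, rfl⟩, rfl⟩
    exact ⟨Iᶜ, by rwa [compl_compl], by rw [Set.ncard_compl_inter U.toFinite]⟩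

theorem Nat.sSup_image_tsub (c : ℕ) {B : Set ℕ} (hB : B.Nonempty) :
    sSup ((c - ·) '' B) = c - sInf B := by
  refine le_antisymm (csSup_le (hB.image _) ?_) (le_csSup ⟨c, ?_⟩ ⟨_, Nat.sInf_mem hB, rfl⟩)
  · rintro _ ⟨b, hb, rfl⟩
    have := Nat.sInf_le hb
    show c - b ≤ c - sInf B
    omega
  · rintro _ ⟨b, -, rfl⟩
    exact Nat.sub_le c b

theorem statement_14_general {V : Type*} [Fintype V] (G : SimpleGraph V) (U : Set V) :
    sInf {n : ℕ | ∃ S' : Set ↥(closedNbhd G U),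
        IsIndepSet (G.induce (closedNbhd G U)) S' ∧
        IsDominating (G.induce (closedNbhd G U)) S' ∧
        n = (Subtype.val '' S' ∩ U).ncard}
      = U.ncard - optMaxExtVC G U := by
  obtain ⟨I, -, hI⟩ := (isIndepSet_empty G).exists_isMaximalIndepSet_superset
  set B := {n : ℕ | ∃ I, IsMaximalIndepSet G I ∧ n = (I ∩ U).ncard}
  have hIB : (I ∩ U).ncard ∈ B := ⟨I, hI, rfl⟩
  have hBU : sInf B ≤ U.ncard :=
    (Nat.sInf_le hIB).trans (Set.ncard_le_ncard Set.inter_subset_right)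
  rw [setOf_ncard_image_inter_indepDominating_closedNbhd, optMaxExtVC,
    setOf_ncard_inter_isMinimalVertexCover, Nat.sSup_image_tsub _ ⟨_, hIB⟩,
    Nat.sub_sub_self hBU]

/-- Let `U` be an independent set and `G' = G[N_G[U]]`. Then the minimum of
`|S' ∩ U|` over all independent dominating sets `S'` of `G'` equals
`|U| − opt_MaxExtVC(G, U)`. -/
theorem statement_14 {V : Type*} [Fintype V] (G : SimpleGraph V) (U : Set V)
    (hU : IsIndepSet G U) :
    sInf {n : ℕ | ∃ S' : Set ↥(closedNbhd G U),
        IsIndepSet (G.induce (closedNbhd G U)) S' ∧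
        IsDominating (G.induce (closedNbhd G U)) S' ∧
        n = (Subtype.val '' S' ∩ U).ncard}
      = U.ncard - optMaxExtVC G U :=
  statement_14_general G U
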